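/- Let G be a matching-covered graph and let C₁ = δ(X₁) ⊆ C₂ = δ(X₂) ⊆ C₃ = δ(X₃) be odd cuts with X₁ ⊂ X₂ ⊂ X₃. Set F_i := P(G;C_i). Then it cannot happen simultaneously that F₂∩F₁ = F₂∩F₃, that F₂∩F₃ is not contained in {x : x_e = 0} for any edge e, and that at least one of F₂∖F₁, F₂∖F₃ is nonempty. (A cut triple cannot define a face triple.) -/

import Mathlib

open Classical Finset

noncomputable section

namespace PaperPM

variable {V : Type} [Fintype V] [DecidableEq V]

/-- `M` is (the edge set of) a perfect matching of `G`. -/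
def IsPM (G : SimpleGraph V) (M : Finset (Sym2 V)) : Prop :=
  (M : Set (Sym2 V)) ⊆ G.edgeSet ∧ ∀ v : V, ∃! e, e ∈ M ∧ v ∈ e

/-- `G` is matching-covered: every edge lies in a perfect matching. -/
def MatchingCovered (G : SimpleGraph V) : Prop :=
  ∀ e ∈ G.edgeSet, ∃ M, IsPM G M ∧ e ∈ M

/-- incidence (indicator) vector of a set of edges -/
def indVec (M : Finset (Sym2 V)) : Sym2 V → ℝ := fun e => if e ∈ M then 1 else 0

/-- the perfect matching polytope of `G` -/
def pmPolytope (G : SimpleGraph V) : Set (Sym2 V → ℝ) :=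
  convexHull ℝ {x | ∃ M, IsPM G M ∧ x = indVec M}

/-- the cut `δ(X)`: edges of `G` with exactly one endpoint in `X` -/
def cutE (G : SimpleGraph V) (X : Set V) : Finset (Sym2 V) :=
  Finset.univ.filter fun e =>
    e ∈ G.edgeSet ∧ ∃ u v : V, e = s(u, v) ∧ u ∈ X ∧ v ∉ X

/-- `x(A) = Σ_{a ∈ A} x_a` -/
def edgeSum (x : Sym2 V → ℝ) (A : Finset (Sym2 V)) : ℝ := ∑ e ∈ A, x e

/-- the face `P(G;C) = P(G) ∩ {x : x(δ(X)) = 1}` -/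
def faceCut (G : SimpleGraph V) (X : Set V) : Set (Sym2 V → ℝ) :=
  {x ∈ pmPolytope G | edgeSum x (cutE G X) = 1}

/-- `δ(X)` is a tight cut -/
def TightCut (G : SimpleGraph V) (X : Set V) : Prop :=
  Odd X.toFinset.card ∧ 1 < X.toFinset.card ∧ X.toFinset.card < Fintype.card V - 1 ∧
    ∀ M, IsPM G M → (M ∩ cutE G X).card = 1

/-- a brick: non-bipartite matching-covered graph without tight cuts -/
def IsBrick (G : SimpleGraph V) : Prop :=
  MatchingCovered G ∧ ¬ G.Colorable 2 ∧ ∀ X : Set V, ¬ TightCut G X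

/-- dimension of a subset of `ℝ^{Sym2 V}` (affine dimension; `-1` for the empty set) -/
def polyDim (s : Set (Sym2 V → ℝ)) : ℤ :=
  if s = ∅ then -1 else (Module.finrank ℝ (vectorSpan ℝ s) : ℤ)

/-- number of bricks in a tight cut decomposition of `G`, via the dimension
formula `dim P(G) = |E| − |V| + 1 − b(G)` of Naddef and Edmonds–Pulleyblank–Lovász. -/
def brickCount (G : SimpleGraph V) : ℤ :=
  (G.edgeFinset.card : ℤ) - Fintype.card V + 1 - polyDim (pmPolytope G)

/-- (the edge set of) a perfect matching of the contraction `G/X`, viewed inside `G`: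
no edge inside `X`, exactly one cut edge (covering the contraction vertex), and every
vertex outside `X` covered exactly once. This keeps multiple parallel cut edges distinct. -/
def IsPMContr (G : SimpleGraph V) (X : Set V) (M : Finset (Sym2 V)) : Prop :=
  (M : Set (Sym2 V)) ⊆ G.edgeSet ∧ (∀ e ∈ M, ¬ ∀ v ∈ e, v ∈ X) ∧
    (M ∩ cutE G X).card = 1 ∧ ∀ v : V, v ∉ X → ∃! e, e ∈ M ∧ v ∈ e

/-- the contraction `G/X` is matching-covered (every one of its edges, i.e. every
edge of `G` not inside `X`, lies in a perfect matching of `G/X`). -/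
def MatchingCoveredContr (G : SimpleGraph V) (X : Set V) : Prop :=
  ∀ e ∈ G.edgeSet, (¬ ∀ v ∈ e, v ∈ X) → ∃ M, IsPMContr G X M ∧ e ∈ M

/-- `δ(X)` is a separating cut: odd, nontrivial, and both cut-contractions
`G/X` and `G/X̄` are matching-covered. -/
def SeparatingCut (G : SimpleGraph V) (X : Set V) : Prop :=
  Odd X.toFinset.card ∧ 1 < X.toFinset.card ∧ X.toFinset.card < Fintype.card V - 1 ∧
    MatchingCoveredContr G X ∧ MatchingCoveredContr G Xᶜ

/-- the edges of the contraction `G/X`, as edges of `G` -/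
def contrEdges (G : SimpleGraph V) (X : Set V) : Finset (Sym2 V) :=
  G.edgeFinset.filter fun e => ¬ ∀ v ∈ e, v ∈ X

/-- the perfect matching polytope of the contraction `G/X`, in the coordinates of `G` -/
def contrPolytope (G : SimpleGraph V) (X : Set V) : Set (Sym2 V → ℝ) :=
  convexHull ℝ {x | ∃ M, IsPMContr G X M ∧ x = indVec M}

/-- number of bricks of the contraction `G/X`, via the dimension formula -/
def brickCountContr (G : SimpleGraph V) (X : Set V) : ℤ :=
  (contrEdges G X).card - ((Fintype.card V - X.toFinset.card : ℕ) + 1) + 1 -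
    polyDim (contrPolytope G X)

/-- the contraction `G/X` is a Birkhoff–von Neumann graph: its perfect matching
polytope is cut out by nonnegativity, the degree equations, and `x(δ(X)) = 1`. -/
def BvNContr (G : SimpleGraph V) (X : Set V) : Prop :=
  contrPolytope G X =
    {x | (∀ e, 0 ≤ x e) ∧ (∀ e : Sym2 V, (e ∉ G.edgeSet ∨ ∀ v ∈ e, v ∈ X) → x e = 0) ∧
      (∀ v : V, v ∉ X → edgeSum x (cutE G {v}) = 1) ∧ edgeSum x (cutE G X) = 1}

/-- the contraction `G/X` is bipartite -/
def ContrBipartite (G : SimpleGraph V) (X : Set V) : Prop :=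
  ∃ (c : V → Bool) (b : Bool), ∀ u v : V, G.Adj u v → (u ∉ X ∨ v ∉ X) →
    (if u ∈ X then b else c u) ≠ (if v ∈ X then b else c v)

/-- `G` is a Birkhoff–von Neumann graph -/
def BvN (G : SimpleGraph V) : Prop :=
  pmPolytope G =
    {x | (∀ e, 0 ≤ x e) ∧ (∀ e : Sym2 V, e ∉ G.edgeSet → x e = 0) ∧
      ∀ v : V, edgeSum x (cutE G {v}) = 1}

/-- `F` is a face of the convex set `P` -/
def IsFaceOf {E : Type*} [AddCommGroup E] [Module ℝ E] (P F : Set E) : Prop :=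
  F ⊆ P ∧ Convex ℝ F ∧ ∀ x ∈ P, ∀ y ∈ P, ∀ t : ℝ, 0 < t → t < 1 →
    t • x + (1 - t) • y ∈ F → x ∈ F ∧ y ∈ F

/-- a vector is integral if all its coordinates are integers -/
def Integral (x : Sym2 V → ℝ) : Prop := ∀ e, ∃ n : ℤ, x e = (n : ℝ)

/-- the Petersen graph, as the Kneser graph `K(5,2)` -/
def petersenGraph : SimpleGraph {s : Finset (Fin 5) // s.card = 2} where
  Adj a b := Disjoint (a : Finset (Fin 5)) (b : Finset (Fin 5))
  symm := ⟨fun _ _ h => h.symm⟩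
  loopless := ⟨fun a h => by
    have h0 : (a : Finset (Fin 5)) = ∅ := by
      simpa [Finset.bot_eq_empty] using disjoint_self.mp h
    have h2 := a.2
    rw [h0] at h2
    simp at h2⟩

/-!
Every perfect matching meets an odd cut an odd number of times, so a point of `P(G)` lies on
`Fᵢ = P(G; δ(Xᵢ))` iff every perfect matching in a convex decomposition of it meets `δ(Xᵢ)`
exactly once. It therefore suffices to show that every perfect matching `M` with
`M ∩ δ(X₂) = {f}` meets `δ(X₁)` and `δ(X₃)` exactly once, for then `F₂ ⊆ F₁ ∩ F₃`.

Some `x ∈ F₂ ∩ F₃ = F₂ ∩ F₁` has `x_f ≠ 0`, so its decomposition contains a perfect matching `M'`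
through `f` meeting each of `δ(X₁), δ(X₂), δ(X₃)` once. Splicing `M` inside `X₂` with `M'`
outside gives a perfect matching in `F₂ ∩ F₃ = F₂ ∩ F₁` that agrees with `M` on `δ(X₁)`; splicing
the other way round gives one in `F₂ ∩ F₁ = F₂ ∩ F₃` that agrees with `M` on `δ(X₃)`.
-/

end PaperPM

namespace PaperPM

lemma eq_one_of_sum_mul_eq_sum {R ι : Type*} [Field R] [LinearOrder R] [IsStrictOrderedRing R]
    {s : Finset ι} {w c : ι → R} (hw : ∀ i ∈ s, 0 ≤ w i) (hc : ∀ i ∈ s, 1 ≤ c i)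
    (h : ∑ i ∈ s, w i * c i = ∑ i ∈ s, w i) {i : ι} (hi : i ∈ s) (hwi : w i ≠ 0) : c i = 1 := by
  have hle : ∀ j ∈ s, w j ≤ w j * c j := fun j hj => le_mul_of_one_le_right (hw j hj) (hc j hj)
  exact (mul_eq_left₀ hwi).mp ((sum_eq_sum_iff_of_le hle).mp h.symm i hi).symm

variable {V : Type}

lemma edgeSum_sum_smul {ι : Type*} (t : Finset ι) (w : ι → ℝ) (y : ι → Sym2 V → ℝ)
    (A : Finset (Sym2 V)) :
    edgeSum (∑ i ∈ t, w i • y i) A = ∑ i ∈ t, w i * edgeSum (y i) A := by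
  simp only [edgeSum, Finset.sum_apply, Pi.smul_apply, smul_eq_mul, mul_sum]
  exact sum_comm

section

variable [DecidableEq V] {G : SimpleGraph V}

lemma edgeSum_indVec (M A : Finset (Sym2 V)) : edgeSum (indVec M) A = #(M ∩ A) := by
  simp only [edgeSum, indVec, sum_boole, filter_mem_eq_inter, inter_comm]

lemma exists_isPM_combination_of_mem_pmPolytope {x : Sym2 V → ℝ} (hx : x ∈ pmPolytope G) :
    ∃ (ι : Type) (_ : Fintype ι) (w : ι → ℝ) (M : ι → Finset (Sym2 V)),
      (∀ i, 0 ≤ w i) ∧ ∑ i, w i = 1 ∧ (∀ i, IsPM G (M i)) ∧ x = ∑ i, w i • indVec (M i) := by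
  obtain ⟨ι, _, w, z, hw0, hw1, hz, rfl⟩ := mem_convexHull_iff_exists_fintype.mp hx
  choose M hM hzM using hz
  exact ⟨ι, inferInstance, w, M, hw0, hw1, hM, by simp_rw [hzM]⟩

/-- The perfect matching `M''` of the paper, when `M ∩ δ(Y) = M' ∩ δ(Y) = {f}`. -/
def splice (Y : Set V) (M M' : Finset (Sym2 V)) : Finset (Sym2 V) :=
  {e ∈ M | ∃ u ∈ e, u ∈ Y} ∪ {e ∈ M' | ∀ v ∈ e, v ∉ Y}

lemma mem_splice_of_exists_mem {Y : Set V} {M M' : Finset (Sym2 V)} {e : Sym2 V}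
    (he : ∃ u ∈ e, u ∈ Y) : e ∈ splice Y M M' ↔ e ∈ M := by
  obtain ⟨u, hue, hu⟩ := he
  simp only [splice, mem_union, mem_filter]
  exact ⟨fun h => h.elim And.left fun h => absurd hu (h.2 u hue), fun h => Or.inl ⟨h, u, hue, hu⟩⟩

variable [Fintype V]

lemma mem_cutE_iff {X : Set V} {e : Sym2 V} :
    e ∈ cutE G X ↔ e ∈ G.edgeSet ∧ (∃ u ∈ e, u ∈ X) ∧ ∃ v ∈ e, v ∉ X := by
  simp only [cutE, mem_filter, mem_univ, true_and]
  refine and_congr_right fun _ => ⟨?_, ?_⟩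
  · rintro ⟨u, v, rfl, hu, hv⟩
    exact ⟨⟨u, Sym2.mem_mk_left u v, hu⟩, v, Sym2.mem_mk_right u v, hv⟩
  · rintro ⟨⟨u, hue, hu⟩, v, hve, hv⟩
    have huv : u ≠ v := by rintro rfl; exact hv hu
    exact ⟨u, v, (Sym2.mem_and_mem_iff huv).mp ⟨hue, hve⟩, hu, hv⟩

lemma odd_card_filter_mem_iff {X : Set V} {e : Sym2 V} (he : e ∈ G.edgeSet) :
    Odd #{v ∈ X.toFinset | v ∈ e} ↔ e ∈ cutE G X := by
  induction e using Sym2.ind with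
  | _ a b =>
    have hab : a ≠ b := (G.mem_edgeSet.mp he).ne
    have hfilter : {v ∈ X.toFinset | v ∈ s(a, b)} = ({a, b} : Finset V).filter (· ∈ X) := by
      ext v
      simp only [mem_filter, Set.mem_toFinset, Sym2.mem_iff, mem_insert, mem_singleton]
      tauto
    rw [hfilter, mem_cutE_iff]
    by_cases ha : a ∈ X <;> by_cases hb : b ∈ X <;>
      simp [filter_insert, filter_singleton, ha, hb, hab, he]

/-- Double counting the pairs `(v, e)` with `v ∈ X`, `v ∈ e ∈ M`: each edge of `M` contributes
`|e ∩ X|`, which is odd exactly for the edges of `δ(X)`. -/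
lemma IsPM.odd_card_inter_cutE {M : Finset (Sym2 V)} {X : Set V} (hM : IsPM G M)
    (hX : Odd #X.toFinset) : Odd #(M ∩ cutE G X) := by
  have hdeg : ∀ v, #{e ∈ M | v ∈ e} = 1 := fun v => by
    obtain ⟨e, he, huniq⟩ := hM.2 v
    exact card_eq_one.mpr ⟨e, by ext e'; simpa using ⟨fun h => huniq e' h, fun h => h ▸ he⟩⟩
  have hcount : #X.toFinset = ∑ e ∈ M, #{v ∈ X.toFinset | v ∈ e} := by
    simpa [bipartiteAbove, bipartiteBelow, hdeg] using
      sum_card_bipartiteAbove_eq_sum_card_bipartiteBelow (s := X.toFinset) (t := M) (· ∈ ·)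
  rw [hcount, odd_sum_iff_odd_card_odd] at hX
  convert hX using 2
  ext e
  simp only [mem_inter, mem_filter, and_congr_right_iff]
  exact fun heM => (odd_card_filter_mem_iff (hM.1 heM)).symm

lemma IsPM.indVec_mem_faceCut_iff {M : Finset (Sym2 V)} {X : Set V} (hM : IsPM G M) :
    indVec M ∈ faceCut G X ↔ #(M ∩ cutE G X) = 1 := by
  have hP : indVec M ∈ pmPolytope G := subset_convexHull ℝ _ ⟨M, hM, rfl⟩
  simp [faceCut, hP, edgeSum_indVec]

lemma card_inter_cutE_eq_one_of_edgeSum_eq_one {ι : Type*} [Fintype ι] {w : ι → ℝ}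
    {M : ι → Finset (Sym2 V)} {X : Set V} (hX : Odd #X.toFinset) (hw0 : ∀ i, 0 ≤ w i)
    (hw1 : ∑ i, w i = 1) (hM : ∀ i, IsPM G (M i))
    (hx : edgeSum (∑ i, w i • indVec (M i)) (cutE G X) = 1) {i : ι} (hwi : w i ≠ 0) :
    #(M i ∩ cutE G X) = 1 := by
  rw [edgeSum_sum_smul, ← hw1] at hx
  simp only [edgeSum_indVec] at hx
  exact_mod_cast eq_one_of_sum_mul_eq_sum (fun j _ => hw0 j)
    (fun j _ => by exact_mod_cast ((hM j).odd_card_inter_cutE hX).pos) hx (mem_univ i) hwi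

lemma faceCut_subset_faceCut {X Y : Set V} (hX : Odd #X.toFinset)
    (h : ∀ M, IsPM G M → #(M ∩ cutE G X) = 1 → #(M ∩ cutE G Y) = 1) :
    faceCut G X ⊆ faceCut G Y := by
  rintro x ⟨hxP, hxX⟩
  obtain ⟨ι, _, w, M, hw0, hw1, hM, rfl⟩ := exists_isPM_combination_of_mem_pmPolytope hxP
  refine ⟨hxP, ?_⟩
  rw [edgeSum_sum_smul, ← hw1]
  refine sum_congr rfl fun i _ => ?_
  rcases eq_or_ne (w i) 0 with hwi | hwi
  · rw [hwi, zero_mul]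
  · rw [edgeSum_indVec, h _ (hM i) (card_inter_cutE_eq_one_of_edgeSum_eq_one hX hw0 hw1 hM hxX hwi),
      Nat.cast_one, mul_one]

lemma exists_isPM_mem_of_apply_ne_zero {x : Sym2 V → ℝ} {e : Sym2 V} (hx : x ∈ pmPolytope G)
    (he : x e ≠ 0) : ∃ M, IsPM G M ∧ e ∈ M ∧
      ∀ X : Set V, Odd #X.toFinset → x ∈ faceCut G X → #(M ∩ cutE G X) = 1 := by
  obtain ⟨ι, _, w, M, hw0, hw1, hM, rfl⟩ := exists_isPM_combination_of_mem_pmPolytope hx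
  rw [Finset.sum_apply] at he
  obtain ⟨i, -, hi⟩ := exists_ne_zero_of_sum_ne_zero he
  rw [Pi.smul_apply, smul_eq_mul] at hi
  have heM : e ∈ M i := by
    by_contra h
    simp [indVec, h] at hi
  exact ⟨M i, hM i, heM, fun X hX hxX =>
    card_inter_cutE_eq_one_of_edgeSum_eq_one hX hw0 hw1 hM hxX.2 (left_ne_zero_of_mul hi)⟩

section splice

variable {Y : Set V} {M M' : Finset (Sym2 V)} {e f : Sym2 V}

lemma mem_splice_of_exists_not_mem (hM : (M : Set (Sym2 V)) ⊆ G.edgeSet)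
    (hM' : (M' : Set (Sym2 V)) ⊆ G.edgeSet) (hMf : M ∩ cutE G Y = {f})
    (hM'f : M' ∩ cutE G Y = {f}) (he : ∃ v ∈ e, v ∉ Y) : e ∈ splice Y M M' ↔ e ∈ M' := by
  have eq_f : ∀ N : Finset (Sym2 V), (N : Set (Sym2 V)) ⊆ G.edgeSet → N ∩ cutE G Y = {f} →
      e ∈ N → (∃ u ∈ e, u ∈ Y) → e = f := fun N hN hNf heN hu => by
    simpa [hNf] using mem_inter.mpr ⟨heN, mem_cutE_iff.mpr ⟨hN heN, hu, he⟩⟩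
  have hfM : f ∈ M := (mem_inter.mp (hMf ▸ mem_singleton_self f)).1
  have hfM' : f ∈ M' := (mem_inter.mp (hM'f ▸ mem_singleton_self f)).1
  simp only [splice, mem_union, mem_filter]
  constructor
  · rintro (⟨heM, hu⟩ | ⟨heM', -⟩)
    · exact eq_f M hM hMf heM hu ▸ hfM'
    · exact heM'
  · intro heM'
    by_cases hu : ∃ u ∈ e, u ∈ Y
    · exact Or.inl ⟨eq_f M' hM' hM'f heM' hu ▸ hfM, hu⟩
    · push Not at hu
      exact Or.inr ⟨heM', hu⟩

lemma splice_inter_cutE_of_subset {W : Set V} (hW : W ⊆ Y) :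
    splice Y M M' ∩ cutE G W = M ∩ cutE G W := by
  ext e
  simp only [mem_inter, and_congr_left_iff]
  intro heW
  obtain ⟨-, ⟨u, hue, hu⟩, -⟩ := mem_cutE_iff.mp heW
  exact mem_splice_of_exists_mem ⟨u, hue, hW hu⟩

lemma splice_inter_cutE_of_superset {Z : Set V} (hZ : Y ⊆ Z)
    (hM : (M : Set (Sym2 V)) ⊆ G.edgeSet) (hM' : (M' : Set (Sym2 V)) ⊆ G.edgeSet)
    (hMf : M ∩ cutE G Y = {f}) (hM'f : M' ∩ cutE G Y = {f}) :
    splice Y M M' ∩ cutE G Z = M' ∩ cutE G Z := by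
  ext e
  simp only [mem_inter, and_congr_left_iff]
  intro heZ
  obtain ⟨-, -, v, hve, hv⟩ := mem_cutE_iff.mp heZ
  exact mem_splice_of_exists_not_mem hM hM' hMf hM'f ⟨v, hve, fun hvY => hv (hZ hvY)⟩

lemma isPM_splice (hM : IsPM G M) (hM' : IsPM G M') (hMf : M ∩ cutE G Y = {f})
    (hM'f : M' ∩ cutE G Y = {f}) : IsPM G (splice Y M M') := by
  refine ⟨fun e he => ?_, fun v => ?_⟩
  · simp only [splice, coe_union, coe_filter, Set.mem_union, Set.mem_ofPred_eq] at he
    rcases he with ⟨h, -⟩ | ⟨h, -⟩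
    exacts [hM.1 h, hM'.1 h]
  · by_cases hv : v ∈ Y
    · refine (existsUnique_congr fun e => and_congr_left fun hve => ?_).mpr (hM.2 v)
      exact mem_splice_of_exists_mem ⟨v, hve, hv⟩
    · refine (existsUnique_congr fun e => and_congr_left fun hve => ?_).mpr (hM'.2 v)
      exact mem_splice_of_exists_not_mem hM.1 hM'.1 hMf hM'f ⟨v, hve, hv⟩

end splice

lemma card_inter_cutE_eq_one_of_faceCut_inter_eq {X₁ X₂ X₃ : Set V}
    (hodd1 : Odd #X₁.toFinset) (hodd2 : Odd #X₂.toFinset) (hodd3 : Odd #X₃.toFinset)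
    (h12 : X₁ ⊆ X₂) (h23 : X₂ ⊆ X₃)
    (hF : faceCut G X₂ ∩ faceCut G X₁ = faceCut G X₂ ∩ faceCut G X₃)
    (hE : ∀ e ∈ G.edgeSet, ∃ x ∈ faceCut G X₂ ∩ faceCut G X₃, x e ≠ 0)
    {M : Finset (Sym2 V)} (hM : IsPM G M) (h2 : #(M ∩ cutE G X₂) = 1) :
    #(M ∩ cutE G X₁) = 1 ∧ #(M ∩ cutE G X₃) = 1 := by
  obtain ⟨f, hMf⟩ := card_eq_one.mp h2
  have hf : f ∈ M ∩ cutE G X₂ := hMf ▸ mem_singleton_self f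
  obtain ⟨x, hx23, hxf⟩ := hE f (hM.1 (mem_inter.mp hf).1)
  have hx21 : x ∈ faceCut G X₂ ∩ faceCut G X₁ := hF ▸ hx23
  obtain ⟨M', hM', hfM', hM'X⟩ := exists_isPM_mem_of_apply_ne_zero hx23.1.1 hxf
  have hM'f : M' ∩ cutE G X₂ = {f} := by
    obtain ⟨g, hg⟩ := card_eq_one.mp (hM'X X₂ hodd2 hx23.1)
    have hfg : f ∈ ({g} : Finset (Sym2 V)) := hg ▸ mem_inter.mpr ⟨hfM', (mem_inter.mp hf).2⟩
    rwa [mem_singleton.mp hfg]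
  have hN := isPM_splice (Y := X₂) hM hM' hMf hM'f
  have hN' := isPM_splice (Y := X₂) hM' hM hM'f hMf
  constructor
  · have h : indVec (splice X₂ M M') ∈ faceCut G X₂ ∩ faceCut G X₃ := by
      rw [Set.mem_inter_iff, hN.indVec_mem_faceCut_iff, hN.indVec_mem_faceCut_iff,
        splice_inter_cutE_of_subset le_rfl, splice_inter_cutE_of_superset h23 hM.1 hM'.1 hMf hM'f]
      exact ⟨h2, hM'X X₃ hodd3 hx23.2⟩
    rw [← hF] at h
    simpa only [splice_inter_cutE_of_subset h12] using hN.indVec_mem_faceCut_iff.mp h.2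
  · have h : indVec (splice X₂ M' M) ∈ faceCut G X₂ ∩ faceCut G X₁ := by
      rw [Set.mem_inter_iff, hN'.indVec_mem_faceCut_iff, hN'.indVec_mem_faceCut_iff,
        splice_inter_cutE_of_subset le_rfl, splice_inter_cutE_of_subset h12]
      exact ⟨hM'X X₂ hodd2 hx23.1, hM'X X₁ hodd1 hx21.2⟩
    rw [hF] at h
    simpa only [splice_inter_cutE_of_superset h23 hM'.1 hM.1 hM'f hMf] using
      hN'.indVec_mem_faceCut_iff.mp h.2

end

variable [Fintype V] [DecidableEq V]

theorem stmt7_general (G : SimpleGraph V) (X₁ X₂ X₃ : Set V)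
    (hodd1 : Odd X₁.toFinset.card) (hodd2 : Odd X₂.toFinset.card)
    (hodd3 : Odd X₃.toFinset.card) (h12 : X₁ ⊂ X₂) (h23 : X₂ ⊂ X₃) :
    ¬ (faceCut G X₂ ∩ faceCut G X₁ = faceCut G X₂ ∩ faceCut G X₃ ∧
        (∀ e ∈ G.edgeSet, ∃ x ∈ faceCut G X₂ ∩ faceCut G X₃, x e ≠ 0) ∧
        ((faceCut G X₂ \ faceCut G X₁).Nonempty ∨
          (faceCut G X₂ \ faceCut G X₃).Nonempty)) := by
  rintro ⟨hF, hE, hne⟩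
  have hcut := fun M (hM : IsPM G M) =>
    card_inter_cutE_eq_one_of_faceCut_inter_eq hodd1 hodd2 hodd3 h12.1 h23.1 hF hE hM
  rcases hne with ⟨x, hx2, hx1⟩ | ⟨x, hx2, hx3⟩
  · exact hx1 (faceCut_subset_faceCut hodd2 (fun M hM h2 => (hcut M hM h2).1) hx2)
  · exact hx3 (faceCut_subset_faceCut hodd2 (fun M hM h2 => (hcut M hM h2).2) hx2)

/-- a cut triple cannot define a face triple. For odd cuts
`C_i = δ(X_i)` with `X₁ ⊂ X₂ ⊂ X₃` and `F_i := P(G;C_i)`, it cannot happen that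
`F₂∩F₁ = F₂∩F₃`, that `F₂∩F₃` lies in no hyperplane `{x : x_e = 0}`, and that one of
`F₂∖F₁`, `F₂∖F₃` is nonempty. -/
theorem stmt7 (G : SimpleGraph V) (hG : MatchingCovered G) (X₁ X₂ X₃ : Set V)
    (hodd1 : Odd X₁.toFinset.card) (hodd2 : Odd X₂.toFinset.card)
    (hodd3 : Odd X₃.toFinset.card) (h12 : X₁ ⊂ X₂) (h23 : X₂ ⊂ X₃) :
    ¬ (faceCut G X₂ ∩ faceCut G X₁ = faceCut G X₂ ∩ faceCut G X₃ ∧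
        (∀ e ∈ G.edgeSet, ∃ x ∈ faceCut G X₂ ∩ faceCut G X₃, x e ≠ 0) ∧
        ((faceCut G X₂ \ faceCut G X₁).Nonempty ∨
          (faceCut G X₂ \ faceCut G X₃).Nonempty)) :=
  stmt7_general G X₁ X₂ X₃ hodd1 hodd2 hodd3 h12 h23

end PaperPM
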